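/- Let ω > 0 and ε be real numbers with 0 < ε < 2/ω, and let L = !![1 − ε^2*ω^2/2, ε; −ε*ω^2*(1 − ε^2*ω^2/4), 1 − ε^2*ω^2/2] be the one-step matrix of the leapfrog integrator with step size ε for the harmonic oscillator q̇ = p, ṗ = −ω²q (obtained from p½ = p − (ε/2)ω²q, q' = q + ε p½, p' = p½ − (ε/2)ω²q'). Then det L = 1 and the characteristic polynomial of L.map Complex.ofReal has two distinct roots, each of modulus one. Hence the leapfrog integrator is stable for the harmonic oscillator when ε < 2/ω. -/

import Mathlib

open Matrix Polynomial ComplexConjugate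

/-!
A real `2 × 2` matrix `M` with `det M = 1` has characteristic polynomial `X² − (tr M) X + 1`.
If `|tr M| < 2`, write `tr M = 2 cos θ` with `0 < θ < π`; the polynomial then factors over `ℂ` as
`(X − e^{iθ})(X − e^{−iθ})`, with two distinct roots on the unit circle. The leapfrog matrix has
determinant `1` (it is a product of three shears) and trace `2 − ε²ω²`, which lies in `(−2, 2)`
exactly when `0 < εω < 2`.
-/

theorem Polynomial.X_sub_C_mul_X_sub_C_conj (z : ℂ) :
    (X - C z) * (X - C (conj z)) =
      X ^ 2 - C ((2 * z.re : ℝ) : ℂ) * X + C (Complex.normSq z : ℂ) := by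
  rw [← Complex.add_conj, ← Complex.mul_conj, C_add, C_mul]
  ring

theorem Complex.exists_norm_eq_one_two_mul_re_eq_ne_conj {t : ℝ} (ht : |t| < 2) :
    ∃ z : ℂ, ‖z‖ = 1 ∧ 2 * z.re = t ∧ z ≠ conj z := by
  obtain ⟨ht₁, ht₂⟩ := abs_lt.mp ht
  set θ := Real.arccos (t / 2)
  refine ⟨exp (θ * I), norm_exp_ofReal_mul_I θ, ?_, fun h => ?_⟩
  · rw [exp_ofReal_mul_I_re, Real.cos_arccos (by linarith) (by linarith)]
    ring
  · have hsin : 0 < Real.sin θ := by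
      rw [Real.sin_arccos]
      exact Real.sqrt_pos.mpr (by nlinarith)
    have him := conj_eq_iff_im.mp h.symm
    rw [exp_ofReal_mul_I_im] at him
    exact hsin.ne' him

theorem Matrix.exists_charpoly_map_ofReal_eq_of_det_eq_one_of_abs_trace_lt_two
    (M : Matrix (Fin 2) (Fin 2) ℝ) (hdet : M.det = 1) (htr : |M.trace| < 2) :
    ∃ lam₁ lam₂ : ℂ, lam₁ ≠ lam₂ ∧ ‖lam₁‖ = 1 ∧ ‖lam₂‖ = 1 ∧
      (M.map Complex.ofReal).charpoly = (X - C lam₁) * (X - C lam₂) := by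
  obtain ⟨z, hnorm, hre, hz⟩ := Complex.exists_norm_eq_one_two_mul_re_eq_ne_conj htr
  refine ⟨z, conj z, hz, hnorm, by rwa [Complex.norm_conj], ?_⟩
  rw [X_sub_C_mul_X_sub_C_conj, Complex.normSq_eq_norm_sq, hnorm,
    show (M.map Complex.ofReal) = M.map Complex.ofRealHom from rfl, charpoly_map,
    charpoly_fin_two, hdet]
  simp [← hre]

/-- **Leapfrog half of Proposition D.1 of the paper.** For the harmonic oscillator
`q̇ = p, ṗ = −ω²q`, the one-step leapfrog matrix
`L = [[1 − ε²ω²/2, ε], [−εω²(1 − ε²ω²/4), 1 − ε²ω²/2]]` with step size `0 < ε < 2/ω`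
has unit determinant and its characteristic polynomial has two distinct roots, each of
modulus one: the leapfrog integrator is stable when `ε < 2/ω`. -/
theorem leapfrog_stable_harmonic_oscillator
    (ω ε : ℝ) (hω : 0 < ω) (hε : 0 < ε) (hεω : ε < 2 / ω)
    (L : Matrix (Fin 2) (Fin 2) ℝ)
    (hL : L = !![1 - ε ^ 2 * ω ^ 2 / 2, ε;
                 -ε * ω ^ 2 * (1 - ε ^ 2 * ω ^ 2 / 4), 1 - ε ^ 2 * ω ^ 2 / 2]) :
    L.det = 1 ∧
    ∃ lam₁ lam₂ : ℂ, lam₁ ≠ lam₂ ∧ ‖lam₁‖ = 1 ∧ ‖lam₂‖ = 1 ∧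
      (L.map Complex.ofReal).charpoly = (X - C lam₁) * (X - C lam₂) := by
  have hεω_pos : 0 < ε * ω := mul_pos hε hω
  have hεω_lt : ε * ω < 2 := (lt_div_iff₀ hω).mp hεω
  have hdet : L.det = 1 := by
    rw [hL, det_fin_two_of]
    ring
  have htr : |L.trace| < 2 := by
    rw [hL, trace_fin_two_of, abs_lt]
    constructor <;> nlinarith
  exact ⟨hdet, L.exists_charpoly_map_ofReal_eq_of_det_eq_one_of_abs_trace_lt_two hdet htr⟩
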